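/- arXiv:2601.18665 — 5 statements merged into one kernel-verified Lean document; each statement's English description precedes it below -/
import Mathlib

section
/- Let α ≥ 1 be a real number. Then the n-dimensional integrals over the unit cube of the ratio of the α-th power sum to the first power sum converge: lim_{n→∞} ∫_{(0,1)^n} (x_1^α + ⋯ + x_n^α)/(x_1 + ⋯ + x_n) dx_1 ⋯ dx_n = 2/(α+1). -/
/-! Let `S = ∑ xᵢ` and `T = ∑ xᵢ ^ α`; since `α ≥ 1` we have `0 ≤ T ≤ S` on the cube.
For any `c > 0`, `T / S - T / c = (T / S) (c - S) / c`, so `|𝔼[T / S] - 𝔼T / c| ≤ 𝔼|S - c| / c`.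
Taking `c = 𝔼S = n / 2`, Cauchy–Schwarz bounds `𝔼|S - c|` by `√(Var S)`, and independence of
the coordinates together with Popoviciu's inequality gives `Var S ≤ n / 4`.
As `𝔼T / c = 2 / (α + 1)`, the integral is within `1 / √n` of the limit. -/

open MeasureTheory Filter ProbabilityTheory Set

lemma abs_div_sub_div_le_abs_sub_div {T S c : ℝ} (hT : 0 ≤ T) (hTS : T ≤ S) (hc : 0 < c) :
    |T / S - T / c| ≤ |S - c| / c := by
  rcases hT.eq_or_lt with rfl | hT
  · simp [div_nonneg (abs_nonneg _) hc.le]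
  have hS : 0 < S := hT.trans_le hTS
  have hratio : |T / S| ≤ 1 := by
    rw [abs_of_nonneg (div_nonneg hT.le hS.le)]
    exact (div_le_one hS).mpr hTS
  calc |T / S - T / c| = |T / S| * (|S - c| / c) := by
        rw [show T / S - T / c = T / S * ((c - S) / c) by field_simp, abs_mul,
          abs_div (c - S), abs_of_pos hc, abs_sub_comm]
    _ ≤ |S - c| / c := mul_le_of_le_one_left (by positivity) hratio

section ProbabilitySpace

variable {Ω : Type*} {mΩ : MeasurableSpace Ω} {P : Measure Ω} [IsProbabilityMeasure P]

lemma integral_abs_sub_integral_le_sqrt_variance {X : Ω → ℝ} (hX : MemLp X 2 P) :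
    ∫ ω, |X ω - P[X]| ∂P ≤ √(Var[X; P]) := by
  have hY : MemLp (fun ω => |X ω - P[X]|) 2 P := (hX.sub (memLp_const _)).abs
  have hsq : P[(fun ω => |X ω - P[X]|) ^ 2] = Var[X; P] := by
    rw [variance_eq_integral hX.aemeasurable]
    simp only [Pi.pow_apply, sq_abs]
  have := variance_nonneg (fun ω => |X ω - P[X]|) P
  rw [variance_eq_sub hY, hsq] at this
  exact (le_abs_self _).trans (Real.abs_le_sqrt (by linarith))

lemma abs_integral_div_sub_integral_div_le {T S : Ω → ℝ} (hT : Integrable T P)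
    (hS : Integrable S P) (hTS : ∀ᵐ ω ∂P, 0 ≤ T ω ∧ T ω ≤ S ω) {c : ℝ} (hc : 0 < c) :
    |∫ ω, T ω / S ω ∂P - P[T] / c| ≤ (∫ ω, |S ω - c| ∂P) / c := by
  have hratio : Integrable (fun ω => T ω / S ω) P := by
    refine (integrable_const (1 : ℝ)).mono'
      (hT.aemeasurable.div hS.aemeasurable).aestronglyMeasurable ?_
    filter_upwards [hTS] with ω ⟨h0, h1⟩
    rw [Real.norm_eq_abs, abs_of_nonneg (div_nonneg h0 (h0.trans h1))]
    exact div_le_one_of_le₀ h1 (h0.trans h1)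
  rw [← integral_div, ← integral_div, ← integral_sub hratio (hT.div_const c)]
  calc |∫ ω, (T ω / S ω - T ω / c) ∂P| ≤ ∫ ω, |T ω / S ω - T ω / c| ∂P :=
        abs_integral_le_integral_abs
    _ ≤ ∫ ω, |S ω - c| / c ∂P := by
        refine integral_mono_ae (hratio.sub (hT.div_const c)).abs
          ((hS.sub (integrable_const c)).abs.div_const c) ?_
        filter_upwards [hTS] with ω ⟨h0, h1⟩
        exact abs_div_sub_div_le_abs_sub_div h0 h1 hc

end ProbabilitySpace

section ProductMeasure

variable {ι : Type*} [Fintype ι] {ν : Measure ℝ} [IsProbabilityMeasure ν]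

lemma variance_sum_eval_le (h01 : ∀ᵐ t ∂ν, t ∈ Icc (0 : ℝ) 1) :
    Var[fun x : ι → ℝ => ∑ i, x i; Measure.pi fun _ => ν] ≤ Fintype.card ι / 4 := by
  have hid : MemLp id 2 ν :=
    memLp_of_bounded h01 measurable_id.aestronglyMeasurable 2
  have hvar : Var[id; ν] ≤ 1 / 4 :=
    (variance_le_sq_of_bounded (X := id) h01 aemeasurable_id).trans_eq (by norm_num)
  calc Var[fun x : ι → ℝ => ∑ i, x i; Measure.pi fun _ => ν]
      = ∑ _i : ι, Var[id; ν] := by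
        rw [← variance_sum_pi (X := fun _ => id) fun _ => hid]
        congr 1
        ext x
        simp
    _ ≤ ∑ _i : ι, (1 / 4 : ℝ) := Finset.sum_le_sum fun _ _ => hvar
    _ = Fintype.card ι / 4 := by simp [div_eq_mul_inv]

theorem abs_integral_sum_div_sum_sub_le [Nonempty ι] {g : ℝ → ℝ}
    (h01 : ∀ᵐ t ∂ν, t ∈ Icc (0 : ℝ) 1) (hgm : AEStronglyMeasurable g ν)
    (hg : ∀ᵐ t ∂ν, 0 ≤ g t ∧ g t ≤ t) (hm : 0 < ∫ t, t ∂ν) :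
    |∫ x, (∑ i, g (x i)) / (∑ i, x i) ∂Measure.pi (fun _ : ι => ν) -
        (∫ t, g t ∂ν) / ∫ t, t ∂ν| ≤ 1 / (2 * (∫ t, t ∂ν) * √(Fintype.card ι)) := by
  set m := ∫ t, t ∂ν
  set n : ℝ := (Fintype.card ι : ℝ)
  have hn : 0 < n := by simp [n, Fintype.card_pos]
  have hid : MemLp id 2 ν := memLp_of_bounded h01 measurable_id.aestronglyMeasurable 2
  have hg_int : Integrable g ν := by
    refine (integrable_const (1 : ℝ)).mono' hgm ?_
    filter_upwards [h01, hg] with t ht ⟨h0, h1⟩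
    rw [Real.norm_eq_abs, abs_of_nonneg h0]
    exact h1.trans ht.2
  have hS : MemLp (fun x : ι → ℝ => ∑ i, x i) 2 (Measure.pi fun _ : ι => ν) :=
    memLp_finsetSum _ fun i _ => hid.comp_measurePreserving (measurePreserving_eval _ i)
  have hT : Integrable (fun x : ι → ℝ => ∑ i, g (x i)) (Measure.pi fun _ : ι => ν) :=
    integrable_finsetSum _ fun i _ => integrable_comp_eval hg_int
  have hES : ∫ x, ∑ i, x i ∂(Measure.pi fun _ : ι => ν) = n * m := by
    rw [integral_finsetSum _ fun i _ =>
      integrable_eval (μ := fun _ => ν) (i := i) (hid.integrable one_le_two)]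
    simp [integral_eval, n, m]
  have hET : ∫ x, ∑ i, g (x i) ∂(Measure.pi fun _ : ι => ν) = n * ∫ t, g t ∂ν := by
    rw [integral_finsetSum _ fun i _ => integrable_comp_eval hg_int]
    have (i : ι) := integral_comp_eval (μ := fun _ : ι => ν) (i := i) hgm
    simp [this, n]
  have hTS : ∀ᵐ x ∂(Measure.pi fun _ : ι => ν),
      0 ≤ ∑ i, g (x i) ∧ ∑ i, g (x i) ≤ ∑ i, x i := by
    filter_upwards [ae_all_iff.mpr fun i => Measure.tendsto_eval_ae_ae (i := i) hg] with x hx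
    exact ⟨Finset.sum_nonneg fun i _ => (hx i).1, Finset.sum_le_sum fun i _ => (hx i).2⟩
  rw [← mul_div_mul_left (∫ t, g t ∂ν) m hn.ne', ← hET]
  calc _ ≤ (∫ x, |∑ i, x i - n * m| ∂(Measure.pi fun _ : ι => ν)) / (n * m) :=
        abs_integral_div_sub_integral_div_le hT (hS.integrable one_le_two) hTS (by positivity)
    _ ≤ √(Var[fun x : ι → ℝ => ∑ i, x i; Measure.pi fun _ => ν]) / (n * m) := by
        rw [← hES]
        exact div_le_div_of_nonneg_right (integral_abs_sub_integral_le_sqrt_variance hS)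
          (hES ▸ by positivity)
    _ ≤ √(n / 4) / (n * m) := by
        gcongr
        exact variance_sum_eval_le h01
    _ = 1 / (2 * m * √n) := by
        rw [Real.sqrt_div' _ (by norm_num : (0:ℝ) ≤ 4), show √(4 : ℝ) = 2 by
          rw [show (4 : ℝ) = 2 ^ 2 by norm_num, Real.sqrt_sq (by norm_num)]]
        field_simp
        exact Real.sq_sqrt hn.le

end ProductMeasure

instance isProbabilityMeasure_restrict_Ioo_zero_one :
    IsProbabilityMeasure (volume.restrict (Ioo (0 : ℝ) 1)) :=
  ⟨by simp⟩

lemma integral_Ioo_zero_one_rpow {α : ℝ} (hα : -1 < α) :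
    ∫ t in Ioo (0 : ℝ) 1, t ^ α = 1 / (α + 1) := by
  rw [← integral_Ioc_eq_integral_Ioo, ← intervalIntegral.integral_of_le zero_le_one,
    integral_rpow (Or.inl hα), Real.one_rpow, Real.zero_rpow (by linarith), sub_zero]

lemma abs_setIntegral_cube_sum_rpow_div_sum_sub_le {α : ℝ} (hα : 1 ≤ α) {n : ℕ} (hn : n ≠ 0) :
    |(∫ x : Fin n → ℝ in univ.pi (fun _ => Ioo (0 : ℝ) 1), (∑ i, x i ^ α) / (∑ i, x i))
        - 2 / (α + 1)| ≤ 1 / √n := by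
  have : Nonempty (Fin n) := ⟨⟨0, Nat.pos_of_ne_zero hn⟩⟩
  have h01 : ∀ᵐ t ∂volume.restrict (Ioo (0 : ℝ) 1), t ∈ Icc (0 : ℝ) 1 :=
    (ae_restrict_mem measurableSet_Ioo).mono fun t ht => Ioo_subset_Icc_self ht
  have hg : ∀ᵐ t ∂volume.restrict (Ioo (0 : ℝ) 1), 0 ≤ t ^ α ∧ t ^ α ≤ t := by
    filter_upwards [ae_restrict_mem measurableSet_Ioo] with t ⟨h0, h1⟩
    exact ⟨Real.rpow_nonneg h0.le α,
      (Real.rpow_le_rpow_of_exponent_ge h0 h1.le hα).trans_eq (Real.rpow_one t)⟩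
  have hm : ∫ t in Ioo (0 : ℝ) 1, t = 1 / 2 := by
    have h := integral_Ioo_zero_one_rpow (α := 1) (by norm_num)
    simp only [Real.rpow_one] at h
    rw [h]
    norm_num
  have key := abs_integral_sum_div_sum_sub_le (ι := Fin n) h01
    (Real.continuous_rpow_const (by linarith)).aestronglyMeasurable hg (by rw [hm]; norm_num)
  rw [volume_pi, Measure.restrict_pi_pi]
  rw [hm, integral_Ioo_zero_one_rpow (by linarith), Fintype.card_fin] at key
  convert key using 2 <;> ring

/-- For a real `α ≥ 1`, the integrals over the unit cube `(0,1)^n` of the ratio of the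
`α`-th power sum to the first power sum converge to `2/(α+1)` as `n → ∞`. -/
theorem tendsto_integral_powerSum_ratio (α : ℝ) (hα : 1 ≤ α) :
    Tendsto
      (fun n : ℕ =>
        ∫ x : Fin n → ℝ in Set.univ.pi (fun _ => Set.Ioo (0:ℝ) 1),
          (∑ i, x i ^ α) / (∑ i, x i))
      atTop (nhds (2 / (α + 1))) := by
  have hrate : Tendsto (fun n : ℕ => 1 / √n) atTop (nhds 0) := by
    simpa only [one_div, Function.comp_def] using
      tendsto_inv_atTop_zero.comp (Real.tendsto_sqrt_atTop.comp tendsto_natCast_atTop_atTop)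
  refine tendsto_sub_nhds_zero_iff.mp (squeeze_zero_norm' ?_ hrate)
  filter_upwards [eventually_ne_atTop 0] with n hn
  exact abs_setIntegral_cube_sum_rpow_div_sum_sub_le hα hn
end

section
/- Let (X_i)_{i≥1} be a sequence of independent random variables, each uniformly distributed on the interval (0,1), and let k ≥ 1 be a fixed integer. Then almost surely, as n → ∞, the ratio σ_k^{(n)}/(S_1^{(n)})^k converges to 1/k!, where σ_k^{(n)} = Σ_{1 ≤ i_1 < ⋯ < i_k ≤ n} X_{i_1} ⋯ X_{i_k} is the k-th elementary symmetric polynomial of X_1,…,X_n and S_1^{(n)} = Σ_{i=1}^n X_i. -/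
/-!
Write `eₖ(A)` for the `k`-th elementary symmetric sum of the `xᵢ`, `i ∈ A`, and `S` for their
sum. Counting each `(k+1)`-set together with a marked element gives
`(k + 1) eₖ₊₁ = ∑_{|s| = k} (∑_{i ∉ s} xᵢ) ∏_{j ∈ s} xⱼ`, so for `xᵢ ∈ [0, 1]`
`(S - k) eₖ ≤ (k + 1) eₖ₊₁ ≤ S eₖ`. Dividing by `(k + 1) S^(k+1)` and inducting on `k`,
`eₖ / S^k → 1 / k!` along any sequence in `[0, 1]` whose partial sums diverge. For uniform
samples the strong law gives `Sₙ / n → 1 / 2` almost surely, so the partial sums do diverge.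
-/

open MeasureTheory Filter ProbabilityTheory

open Finset
open scoped Nat Topology

theorem Finset.sum_powersetCard_sum_sdiff_insert {ι M : Type*} [DecidableEq ι] [AddCommMonoid M]
    (A : Finset ι) (k : ℕ) (f : Finset ι → M) :
    ∑ s ∈ A.powersetCard k, ∑ i ∈ A \ s, f (insert i s)
      = (k + 1) • ∑ t ∈ A.powersetCard (k + 1), f t := by
  have hcard : (k + 1) • ∑ t ∈ A.powersetCard (k + 1), f t
      = ∑ t ∈ A.powersetCard (k + 1), ∑ _i ∈ t, f t := by
    rw [smul_sum]
    refine sum_congr rfl fun t ht => ?_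
    rw [sum_const, (mem_powersetCard.1 ht).2]
  rw [hcard, sum_sigma', sum_sigma']
  refine sum_nbij' (fun p => ⟨insert p.2 p.1, p.2⟩) (fun q => ⟨q.1.erase q.2, q.2⟩)
    ?_ ?_ ?_ ?_ ?_
  · rintro ⟨s, i⟩ hp
    simp only [mem_sigma, mem_powersetCard, mem_sdiff] at hp ⊢
    refine ⟨⟨insert_subset hp.2.1 hp.1.1, ?_⟩, mem_insert_self _ _⟩
    rw [card_insert_of_notMem hp.2.2, hp.1.2]
  · rintro ⟨t, i⟩ hq
    simp only [mem_sigma, mem_powersetCard, mem_sdiff] at hq ⊢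
    refine ⟨⟨(erase_subset _ _).trans hq.1.1, ?_⟩, hq.1.1 hq.2, notMem_erase _ _⟩
    rw [card_erase_of_mem hq.2, hq.1.2, Nat.add_sub_cancel]
  · rintro ⟨s, i⟩ hp
    simp only [mem_sigma, mem_powersetCard, mem_sdiff] at hp
    simp [erase_insert hp.2.2]
  · rintro ⟨t, i⟩ hq
    simp only [mem_sigma, mem_powersetCard] at hq
    simp [insert_erase hq.2]
  · exact fun _ _ => rfl

theorem Finset.sum_powersetCard_sum_sdiff_mul_prod {ι R : Type*} [DecidableEq ι]
    [CommSemiring R] (A : Finset ι) (x : ι → R) (k : ℕ) :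
    ∑ s ∈ A.powersetCard k, (∑ i ∈ A \ s, x i) * ∏ j ∈ s, x j
      = (k + 1) * ∑ t ∈ A.powersetCard (k + 1), ∏ j ∈ t, x j := by
  calc ∑ s ∈ A.powersetCard k, (∑ i ∈ A \ s, x i) * ∏ j ∈ s, x j
      = ∑ s ∈ A.powersetCard k, ∑ i ∈ A \ s, ∏ j ∈ insert i s, x j := by
        refine sum_congr rfl fun s _ => ?_
        rw [sum_mul]
        exact sum_congr rfl fun i hi => (prod_insert (mem_sdiff.1 hi).2).symm
    _ = (k + 1) * ∑ t ∈ A.powersetCard (k + 1), ∏ j ∈ t, x j := by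
        rw [sum_powersetCard_sum_sdiff_insert A k (fun t => ∏ j ∈ t, x j), nsmul_eq_mul]
        push_cast
        rfl

section ElementarySymmetric

variable {ι R : Type*} [DecidableEq ι] [CommRing R] [LinearOrder R] [IsStrictOrderedRing R]
  {A : Finset ι} {x : ι → R} (k : ℕ)

theorem Finset.card_succ_mul_sum_powersetCard_prod_le (h0 : ∀ i ∈ A, 0 ≤ x i) :
    (k + 1) * ∑ t ∈ A.powersetCard (k + 1), ∏ j ∈ t, x j
      ≤ (∑ i ∈ A, x i) * ∑ s ∈ A.powersetCard k, ∏ j ∈ s, x j := by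
  rw [← sum_powersetCard_sum_sdiff_mul_prod, mul_sum]
  refine sum_le_sum fun s hs => ?_
  have hsA := (mem_powersetCard.1 hs).1
  exact mul_le_mul_of_nonneg_right
    (sum_le_sum_of_subset_of_nonneg sdiff_subset fun i hi _ => h0 i hi)
    (prod_nonneg fun j hj => h0 j (hsA hj))

theorem Finset.sub_mul_sum_powersetCard_prod_le (h0 : ∀ i ∈ A, 0 ≤ x i)
    (h1 : ∀ i ∈ A, x i ≤ 1) :
    ((∑ i ∈ A, x i) - k) * ∑ s ∈ A.powersetCard k, ∏ j ∈ s, x j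
      ≤ (k + 1) * ∑ t ∈ A.powersetCard (k + 1), ∏ j ∈ t, x j := by
  rw [← sum_powersetCard_sum_sdiff_mul_prod, mul_sum]
  refine sum_le_sum fun s hs => ?_
  obtain ⟨hsA, hcard⟩ := mem_powersetCard.1 hs
  have hs_le : ∑ i ∈ s, x i ≤ k := by
    simpa [hcard] using sum_le_card_nsmul s x 1 fun i hi => h1 i (hsA hi)
  refine mul_le_mul_of_nonneg_right ?_ (prod_nonneg fun j hj => h0 j (hsA hj))
  rw [sum_sdiff_eq_sub hsA]
  linarith

end ElementarySymmetric

section Ratio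

variable {S a b : ℝ} (k : ℕ)

theorem div_pow_succ_le_of_mul_le (hS : 0 < S) (h : (k + 1) * b ≤ S * a) :
    b / S ^ (k + 1) ≤ a / S ^ k / (k + 1) := by
  rw [div_div, div_le_div_iff₀ (by positivity) (by positivity), pow_succ]
  have := mul_le_mul_of_nonneg_left h (pow_pos hS k).le
  linarith

theorem le_div_pow_succ_of_sub_mul_le (hS : 0 < S) (h : (S - k) * a ≤ (k + 1) * b) :
    (1 - k * S⁻¹) * (a / S ^ k / (k + 1)) ≤ b / S ^ (k + 1) := by
  have heq : (1 - k * S⁻¹) * (a / S ^ k / (k + 1)) = (S - k) * a / (k + 1) / S ^ (k + 1) := by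
    field_simp
    ring
  rw [heq]
  gcongr
  rwa [div_le_iff₀ (by positivity), mul_comm b]

end Ratio

theorem tendsto_sum_powersetCard_prod_div_pow {x : ℕ → ℝ} (h0 : ∀ i, 0 ≤ x i)
    (h1 : ∀ i, x i ≤ 1) (hS : Tendsto (fun n => ∑ i ∈ range n, x i) atTop atTop) (k : ℕ) :
    Tendsto (fun n => (∑ s ∈ (range n).powersetCard k, ∏ i ∈ s, x i) /
      (∑ i ∈ range n, x i) ^ k) atTop (𝓝 (1 / k !)) := by
  induction k with
  | zero => simp
  | succ k ih =>
    set S := fun n => ∑ i ∈ range n, x i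
    set e := fun k n => ∑ s ∈ (range n).powersetCard k, ∏ i ∈ s, x i
    have hlim : 1 / ((k + 1)! : ℝ) = 1 / k ! / (k + 1) := by
      rw [Nat.factorial_succ, Nat.cast_mul, div_div, mul_comm]
      push_cast
      ring
    have hupper : Tendsto (fun n => e k n / S n ^ k / (k + 1)) atTop (𝓝 (1 / (k + 1)!)) :=
      hlim ▸ ih.div_const _
    have hlower : Tendsto (fun n => (1 - k * (S n)⁻¹) * (e k n / S n ^ k / (k + 1))) atTop
        (𝓝 (1 / (k + 1)!)) := by
      simpa using ((hS.inv_tendsto_atTop.const_mul (k : ℝ)).const_sub 1).mul hupper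
    refine tendsto_of_tendsto_of_tendsto_of_le_of_le' hlower hupper ?_ ?_ <;>
      filter_upwards [hS.eventually_gt_atTop 0] with n hn
    · exact le_div_pow_succ_of_sub_mul_le k hn
        (sub_mul_sum_powersetCard_prod_le k (fun i _ => h0 i) fun i _ => h1 i)
    · exact div_pow_succ_le_of_mul_le k hn
        (card_succ_mul_sum_powersetCard_prod_le k fun i _ => h0 i)

theorem ae_mem_of_map_eq_restrict {Ω α : Type*} [MeasurableSpace Ω] [MeasurableSpace α]
    {P : Measure Ω} {μ : Measure α} {Y : Ω → α} {s : Set α} (hY : AEMeasurable Y P)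
    (hs : MeasurableSet s) (h : P.map Y = μ.restrict s) : ∀ᵐ ω ∂P, Y ω ∈ s :=
  ae_of_ae_map hY (h ▸ ae_restrict_mem hs)

theorem integral_eq_half_of_map_eq_uniform {Ω : Type*} [MeasurableSpace Ω] {P : Measure Ω}
    {Y : Ω → ℝ} (hY : AEMeasurable Y P) (h : P.map Y = volume.restrict (Set.Ioo 0 1)) :
    ∫ ω, Y ω ∂P = 1 / 2 := by
  calc ∫ ω, Y ω ∂P = ∫ x in Set.Ioo 0 1, x := by
        rw [← h]; exact (integral_map hY aestronglyMeasurable_id).symm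
    _ = 1 / 2 := by
        rw [← integral_Ioc_eq_integral_Ioo, ← intervalIntegral.integral_of_le zero_le_one,
          integral_id]
        norm_num

theorem tendsto_atTop_of_tendsto_inv_natCast_mul {f : ℕ → ℝ} {c : ℝ} (hc : 0 < c)
    (h : Tendsto (fun n : ℕ => (n : ℝ)⁻¹ * f n) atTop (𝓝 c)) : Tendsto f atTop atTop := by
  refine (tendsto_natCast_atTop_atTop.atTop_mul_pos hc h).congr' ?_
  filter_upwards [eventually_ne_atTop 0] with n hn
  exact mul_inv_cancel_left₀ (Nat.cast_ne_zero.2 hn) (f n)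

theorem tendsto_esymm_div_pow_sum_ae_general
    {Ω : Type*} [MeasurableSpace Ω] (P : Measure Ω) [IsProbabilityMeasure P]
    (X : ℕ → Ω → ℝ) (hmeas : ∀ i, Measurable (X i))
    (hindep : iIndepFun X P)
    (hunif : ∀ i, Measure.map (X i) P = volume.restrict (Set.Ioo (0:ℝ) 1))
    (k : ℕ) :
    ∀ᵐ ω ∂P,
      Tendsto
        (fun n : ℕ =>
          (∑ s ∈ (Finset.range n).powersetCard k, ∏ i ∈ s, X i ω) /
            (∑ i ∈ Finset.range n, X i ω) ^ k)
        atTop (nhds (1 / (Nat.factorial k : ℝ))) := by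
  have hmem : ∀ i, ∀ᵐ ω ∂P, X i ω ∈ Set.Ioo 0 1 := fun i =>
    ae_mem_of_map_eq_restrict (hmeas i).aemeasurable measurableSet_Ioo (hunif i)
  have hint : Integrable (X 0) P := by
    refine .of_bound (hmeas 0).aestronglyMeasurable 1 ?_
    filter_upwards [hmem 0] with ω hω
    rw [Real.norm_eq_abs, abs_le]
    constructor <;> linarith [hω.1, hω.2]
  have hident : ∀ i, IdentDistrib (X i) (X 0) P P := fun i =>
    ⟨(hmeas i).aemeasurable, (hmeas 0).aemeasurable, by rw [hunif i, hunif 0]⟩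
  have hlln := strong_law_ae X hint (fun i j hij => hindep.indepFun hij) hident
  rw [integral_eq_half_of_map_eq_uniform (hmeas 0).aemeasurable (hunif 0)] at hlln
  filter_upwards [hlln, ae_all_iff.2 hmem] with ω hω hωmem
  exact tendsto_sum_powersetCard_prod_div_pow (fun i => (hωmem i).1.le) (fun i => (hωmem i).2.le)
    (tendsto_atTop_of_tendsto_inv_natCast_mul one_half_pos hω) k

/-- If `(X i)` is an i.i.d. sequence of random variables uniformly distributed on `(0,1)`
and `k ≥ 1` is a fixed integer, then almost surely the ratio of the `k`-th elementary
symmetric polynomial `σ_k⁽ⁿ⁾` of `X₁,…,Xₙ` to `(X₁ + ⋯ + Xₙ)^k` converges to `1/k!`. -/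
theorem tendsto_esymm_div_pow_sum_ae
    {Ω : Type*} [MeasurableSpace Ω] (P : Measure Ω) [IsProbabilityMeasure P]
    (X : ℕ → Ω → ℝ) (hmeas : ∀ i, Measurable (X i))
    (hindep : iIndepFun X P)
    (hunif : ∀ i, Measure.map (X i) P = volume.restrict (Set.Ioo (0:ℝ) 1))
    (k : ℕ) (hk : 1 ≤ k) :
    ∀ᵐ ω ∂P,
      Tendsto
        (fun n : ℕ =>
          (∑ s ∈ (Finset.range n).powersetCard k, ∏ i ∈ s, X i ω) /
            (∑ i ∈ Finset.range n, X i ω) ^ k)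
        atTop (nhds (1 / (Nat.factorial k : ℝ))) :=
  tendsto_esymm_div_pow_sum_ae_general P X hmeas hindep hunif k
end

section
/- Let a ≥ 0 be a real number. Then the integrals I_n(a) = ∫_{(0,1)^n} (Σ_{i=1}^n x_i^a)/(Σ_{i=1}^n sin(π x_i)) dx_1 ⋯ dx_n converge as n → ∞, with limit lim_{n→∞} I_n(a) = π/(2(a+1)). -/
/-!
Since `1 / S = ∫₀^∞ e^{-tS} dt` for `S > 0`, Tonelli's theorem and the product structure of the
cube give `I_n = ∫₀^∞ n ψ(t) φ(t)^{n-1} dt` with `φ(t) = ∫₀¹ e^{-t sin πx} dx` and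
`ψ(t) = ∫₀¹ x^a e^{-t sin πx} dx` (`laplaceIntegral μ 1 g` and `laplaceIntegral μ (· ^ a) g`).
After the substitution `t = s / n`, `ψ(s/n) → ∫₀¹ x^a dx = 1/(a+1)`, and `φ(s/n)^{n-1} → e^{-2s/π}`
because `φ(t) = 1 - (2/π) t + O(t²)`. The bound `φ(t) ≤ 1/(1 + k t)`, from convexity of `exp` for
small `t` and from Jordan's inequality `sin πx ≥ 2 min(x, 1 - x)` for large `t`, makes
`(1 + (k s/3)²)⁻¹` a majorant for all `n ≥ 3`, and dominated convergence yields
`∫₀^∞ e^{-2s/π} ds / (a+1) = π/(2(a+1))`.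
-/

open MeasureTheory Filter Real Set Topology

lemma exp_neg_le_one_sub_add_sq {v : ℝ} (hv₀ : 0 ≤ v) (hv₁ : v ≤ 1) :
    exp (-v) ≤ 1 - v + v ^ 2 := by
  have h := abs_le.mp (abs_exp_sub_one_sub_id_le (x := -v) (by rwa [abs_neg, abs_of_nonneg hv₀]))
  linarith [h.2, neg_sq v]

lemma exp_neg_le_chord {v T : ℝ} (hT : 0 < T) (hv₀ : 0 ≤ v) (hvT : v ≤ T) :
    exp (-v) ≤ 1 - (1 - exp (-T)) / T * v := by
  have h := convexOn_exp.2 (mem_univ (-T)) (mem_univ 0) (div_nonneg hv₀ hT.le)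
    (sub_nonneg.2 ((div_le_one hT).2 hvT)) (add_sub_cancel _ _)
  simp only [smul_eq_mul, mul_zero, add_zero, exp_zero, mul_one] at h
  calc exp (-v) = exp (v / T * -T) := by field_simp
    _ ≤ _ := h
    _ = _ := by ring

lemma one_add_mul_div_two_sq_le_pow {x : ℝ} (hx : 0 ≤ x) {m : ℕ} (hm : 2 ≤ m) :
    (1 + m * x / 2) ^ 2 ≤ (1 + x) ^ m := by
  induction m, hm using Nat.le_induction with
  | base => norm_num
  | succ m hm ih =>
    have hm' : (2 : ℝ) ≤ m := by exact_mod_cast hm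
    calc (1 + ((m + 1 : ℕ) : ℝ) * x / 2) ^ 2 ≤ (1 + m * x / 2) ^ 2 * (1 + x) := by
          push_cast
          nlinarith [mul_nonneg (mul_nonneg hx hx) (by linarith : (0 : ℝ) ≤ 2 * m - 1),
            mul_nonneg (pow_nonneg hx 3) (sq_nonneg (m : ℝ))]
      _ ≤ (1 + x) ^ m * (1 + x) := by gcongr
      _ = (1 + x) ^ (m + 1) := (pow_succ _ _).symm

lemma pow_sub_one_le_inv_one_add_sq {x y : ℝ} {n : ℕ} (hn : 3 ≤ n) (hy : 0 ≤ y) (hx₀ : 0 ≤ x)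
    (hx : x ≤ (1 + y / n)⁻¹) : x ^ (n - 1) ≤ (1 + (y / 3) ^ 2)⁻¹ := by
  have hn' : (3 : ℝ) ≤ n := by exact_mod_cast hn
  have hcoef : y / 3 ≤ ((n - 1 : ℕ) : ℝ) * (y / n) / 2 := by
    rw [Nat.cast_sub (by omega), Nat.cast_one]
    field_simp
    nlinarith
  calc x ^ (n - 1) ≤ ((1 + y / n)⁻¹) ^ (n - 1) := pow_le_pow_left₀ hx₀ hx _
    _ = ((1 + y / n) ^ (n - 1))⁻¹ := inv_pow _ _
    _ ≤ (1 + (y / 3) ^ 2)⁻¹ := by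
      refine inv_anti₀ (by positivity) ?_
      calc 1 + (y / 3) ^ 2 ≤ (1 + y / 3) ^ 2 := by nlinarith
        _ ≤ (1 + ((n - 1 : ℕ) : ℝ) * (y / n) / 2) ^ 2 := by gcongr
        _ ≤ (1 + y / n) ^ (n - 1) := one_add_mul_div_two_sq_le_pow (by positivity) (by omega)

lemma integral_Ioi_exp_neg_mul {S : ℝ} (hS : 0 < S) : ∫ t in Ioi 0, exp (-(t * S)) = S⁻¹ := by
  simpa [mul_comm, neg_div] using integral_exp_mul_Ioi (neg_lt_zero.2 hS) 0

lemma integrableOn_Ioi_exp_neg_mul {S : ℝ} (hS : 0 < S) :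
    IntegrableOn (fun t ↦ exp (-(t * S))) (Ioi 0) := by
  simpa [mul_comm] using exp_neg_integrableOn_Ioi 0 hS

section LaplaceIntegral

variable {α : Type*} [MeasurableSpace α] {μ : Measure α} {f g : α → ℝ} {t : ℝ}

noncomputable def laplaceIntegral (μ : Measure α) (f g : α → ℝ) (t : ℝ) : ℝ :=
  ∫ y, f y * exp (-(t * g y)) ∂μ

lemma norm_mul_exp_neg_mul_le {a v : ℝ} (ht : 0 ≤ t) (hv : 0 ≤ v) :
    ‖a * exp (-(t * v))‖ ≤ |a| := by
  rw [norm_mul, norm_eq_abs, norm_of_nonneg (exp_pos _).le]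
  exact mul_le_of_le_one_right (abs_nonneg a) (exp_le_one_iff.2 (by nlinarith))

lemma MeasureTheory.Integrable.mul_exp_neg_mul (hf : Integrable f μ) (hgm : Measurable g)
    (hg : 0 ≤ᵐ[μ] g) (ht : 0 ≤ t) : Integrable (fun y ↦ f y * exp (-(t * g y))) μ :=
  hf.abs.mono' (hf.aestronglyMeasurable.mul (by fun_prop))
    (hg.mono fun _ hy ↦ norm_mul_exp_neg_mul_le ht hy)

lemma laplaceIntegral_nonneg (hf : 0 ≤ᵐ[μ] f) : 0 ≤ laplaceIntegral μ f g t :=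
  integral_nonneg_of_ae (hf.mono fun _ hy ↦ mul_nonneg hy (exp_pos _).le)

lemma abs_laplaceIntegral_le (hf : Integrable f μ) (hg : 0 ≤ᵐ[μ] g) (ht : 0 ≤ t) :
    |laplaceIntegral μ f g t| ≤ ∫ y, |f y| ∂μ := by
  rw [laplaceIntegral, ← norm_eq_abs]
  exact norm_integral_le_of_norm_le hf.abs (hg.mono fun _ hy ↦ norm_mul_exp_neg_mul_le ht hy)

lemma measurable_laplaceIntegral [SFinite μ] (hf : Measurable f) (hg : Measurable g) :
    Measurable (laplaceIntegral μ f g) :=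
  (Measurable.stronglyMeasurable (by fun_prop :
    Measurable fun p : ℝ × α ↦ f p.2 * exp (-(p.1 * g p.2)))).integral_prod_right'.measurable

lemma tendsto_laplaceIntegral_nhdsGT_zero (hf : Integrable f μ) (hgm : Measurable g)
    (hg : 0 ≤ᵐ[μ] g) :
    Tendsto (laplaceIntegral μ f g) (𝓝[>] 0) (𝓝 (∫ y, f y ∂μ)) := by
  have hlim : ∀ y, Tendsto (fun t ↦ f y * exp (-(t * g y))) (𝓝[>] 0) (𝓝 (f y)) := fun y ↦ by
    have : Continuous fun t ↦ f y * exp (-(t * g y)) := by fun_prop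
    simpa using (this.tendsto 0).mono_left nhdsWithin_le_nhds
  refine tendsto_integral_filter_of_dominated_convergence (fun y ↦ |f y|)
    (Eventually.of_forall fun t ↦ ?_) ?_ hf.abs (ae_of_all _ hlim)
  · exact hf.aestronglyMeasurable.mul (by fun_prop)
  · filter_upwards [self_mem_nhdsWithin] with t (ht : 0 < t)
    filter_upwards [hg] with y hy using norm_mul_exp_neg_mul_le ht.le hy

theorem integral_div_eq_integral_Ioi_laplaceIntegral [SFinite μ] (hf : Integrable f μ)
    (hfm : Measurable f) (hf₀ : 0 ≤ᵐ[μ] f) (hgm : Measurable g) (hg : ∀ᵐ y ∂μ, 0 < g y) :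
    ∫ y, f y / g y ∂μ = ∫ t in Ioi 0, laplaceIntegral μ f g t := by
  have hnonneg : ∀ t, 0 ≤ᵐ[μ] fun y ↦ f y * exp (-(t * g y)) := fun t ↦
    hf₀.mono fun y hy ↦ mul_nonneg hy (exp_pos _).le
  have hinner : ∀ y, 0 ≤ f y → 0 < g y →
      ENNReal.ofReal (f y / g y) = ∫⁻ t in Ioi 0, ENNReal.ofReal (f y * exp (-(t * g y))) := by
    intro y hfy hgy
    rw [← ofReal_integral_eq_lintegral_ofReal ((integrableOn_Ioi_exp_neg_mul hgy).const_mul _)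
      (ae_of_all _ fun t ↦ mul_nonneg hfy (exp_pos _).le), integral_const_mul,
      integral_Ioi_exp_neg_mul hgy, div_eq_mul_inv]
  have houter : ∀ t, 0 ≤ t → ENNReal.ofReal (laplaceIntegral μ f g t) =
      ∫⁻ y, ENNReal.ofReal (f y * exp (-(t * g y))) ∂μ := fun t ht ↦
    ofReal_integral_eq_lintegral_ofReal (hf.mul_exp_neg_mul hgm (hg.mono fun _ h ↦ h.le) ht)
      (hnonneg t)
  -- Both sides are nonnegative, so it suffices to compare lintegrals, where Tonelli applies.
  rw [integral_eq_lintegral_of_nonneg_ae (hf₀.mp (hg.mono fun y hgy hfy ↦ div_nonneg hfy hgy.le))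
      (hfm.div hgm).aestronglyMeasurable,
    integral_eq_lintegral_of_nonneg_ae (ae_of_all _ fun _ ↦ laplaceIntegral_nonneg hf₀)
      (measurable_laplaceIntegral hfm hgm).aestronglyMeasurable]
  congr 1
  calc ∫⁻ y, ENNReal.ofReal (f y / g y) ∂μ
      = ∫⁻ y, (∫⁻ t in Ioi 0, ENNReal.ofReal (f y * exp (-(t * g y)))) ∂μ :=
        lintegral_congr_ae (hf₀.mp (hg.mono fun y hgy hfy ↦ hinner y hfy hgy))
    _ = ∫⁻ t in Ioi 0, ∫⁻ y, ENNReal.ofReal (f y * exp (-(t * g y))) ∂μ :=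
        lintegral_lintegral_swap (Measurable.ennreal_ofReal (by fun_prop)).aemeasurable
    _ = ∫⁻ t in Ioi 0, ENNReal.ofReal (laplaceIntegral μ f g t) :=
        setLIntegral_congr_fun measurableSet_Ioi fun t ht ↦ (houter t (le_of_lt ht)).symm

theorem integral_pi_sum_mul_prod [SigmaFinite μ] {n : ℕ} {F G : α → ℝ}
    (hFG : Integrable (fun y ↦ F y * G y) μ) (hG : Integrable G μ) :
    ∫ x, (∑ i, F (x i)) * ∏ j, G (x j) ∂Measure.pi (fun _ : Fin n ↦ μ) =
      n * ((∫ y, F y * G y ∂μ) * (∫ y, G y ∂μ) ^ (n - 1)) := by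
  classical
  have hterm : ∀ i (x : Fin n → α), F (x i) * ∏ j, G (x j) =
      ∏ j, (if j = i then fun y ↦ F y * G y else G) (x j) := by
    intro i x
    rw [← Finset.mul_prod_erase _ _ (Finset.mem_univ i),
      ← Finset.mul_prod_erase _ _ (Finset.mem_univ i), if_pos rfl, mul_assoc]
    congr 2
    exact Finset.prod_congr rfl fun j hj ↦ by rw [if_neg (Finset.ne_of_mem_erase hj)]
  have hint : ∀ i j : Fin n, Integrable ((if j = i then fun y ↦ F y * G y else G)) μ := by
    intro i j; split_ifs <;> assumption
  simp_rw [Finset.sum_mul, hterm]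
  rw [integral_finsetSum _ fun i _ ↦ Integrable.fintype_prod (hint i)]
  simp_rw [integral_fintype_prod_eq_prod, apply_ite (fun h : α → ℝ ↦ ∫ y, h y ∂μ)]
  simp [Finset.prod_ite, Finset.filter_ne', Finset.filter_eq']

theorem integral_pi_sum_div_sum [IsFiniteMeasure μ] (n : ℕ) (hf : Integrable f μ)
    (hfm : Measurable f) (hf₀ : 0 ≤ᵐ[μ] f) (hgm : Measurable g) (hg : ∀ᵐ y ∂μ, 0 < g y) :
    ∫ x, (∑ i, f (x i)) / ∑ i, g (x i) ∂Measure.pi (fun _ : Fin n ↦ μ) =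
      ∫ t in Ioi 0, n * (laplaceIntegral μ f g t * laplaceIntegral μ 1 g t ^ (n - 1)) := by
  rcases n.eq_zero_or_pos with rfl | hn
  · simp
  have hcoord : ∀ {p : α → Prop}, (∀ᵐ y ∂μ, p y) →
      ∀ᵐ x ∂Measure.pi (fun _ : Fin n ↦ μ), ∀ i, p (x i) := fun h ↦
    ae_all_iff.2 fun _ ↦ Measure.tendsto_eval_ae_ae.eventually h
  have hg₀ : 0 ≤ᵐ[μ] g := hg.mono fun _ h ↦ h.le
  rw [integral_div_eq_integral_Ioi_laplaceIntegral
    (integrable_finsetSum _ fun i _ ↦ integrable_comp_eval hf) (by fun_prop)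
    ((hcoord hf₀).mono fun x hx ↦ Finset.sum_nonneg fun i _ ↦ hx i) (by fun_prop)
    ((hcoord hg).mono fun x hx ↦
      Finset.sum_pos (fun i _ ↦ hx i) (Finset.univ_nonempty_iff.2 ⟨⟨0, hn⟩⟩))]
  refine setIntegral_congr_fun measurableSet_Ioi fun t (ht : 0 < t) ↦ ?_
  simp_rw [laplaceIntegral, Finset.mul_sum, ← Finset.sum_neg_distrib, exp_sum]
  rw [integral_pi_sum_mul_prod (hf.mul_exp_neg_mul hgm hg₀ ht.le)
    (by simpa using (integrable_const (1 : ℝ)).mul_exp_neg_mul hgm hg₀ ht.le)]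
  simp

section Probability

variable [IsProbabilityMeasure μ] (hgm : Measurable g) (hg : ∀ᵐ y ∂μ, g y ∈ Icc 0 1)
include hgm hg

lemma integral_const_sub_mul (a c : ℝ) : ∫ y, (a - c * g y) ∂μ = a - c * ∫ y, g y ∂μ := by
  rw [integral_sub (integrable_const a)
    ((Integrable.of_mem_Icc 0 1 hgm.aemeasurable hg).const_mul c), integral_const_mul]
  simp

lemma integrable_laplaceIntegral_one_integrand (ht : 0 ≤ t) :
    Integrable (fun y ↦ (1 : α → ℝ) y * exp (-(t * g y))) μ :=
  Integrable.mul_exp_neg_mul (integrable_const 1) hgm (hg.mono fun _ hy ↦ hy.1) ht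

lemma integrable_const_sub_mul (a c : ℝ) : Integrable (fun y ↦ a - c * g y) μ :=
  (integrable_const a).sub ((Integrable.of_mem_Icc 0 1 hgm.aemeasurable hg).const_mul c)

lemma one_sub_mul_integral_le_laplaceIntegral_one (ht : 0 ≤ t) :
    1 - t * ∫ y, g y ∂μ ≤ laplaceIntegral μ 1 g t := by
  rw [← integral_const_sub_mul hgm hg]
  refine integral_mono (integrable_const_sub_mul hgm hg 1 t)
    (integrable_laplaceIntegral_one_integrand hgm hg ht) fun y ↦ ?_
  simpa using one_sub_le_exp_neg (t * g y)

lemma laplaceIntegral_one_le {a c : ℝ} (ht : 0 ≤ t) (h : ∀ v ∈ Icc 0 t, exp (-v) ≤ a - c * v) :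
    laplaceIntegral μ 1 g t ≤ a - c * t * ∫ y, g y ∂μ := by
  rw [← integral_const_sub_mul hgm hg]
  refine integral_mono_ae (integrable_laplaceIntegral_one_integrand hgm hg ht)
    (integrable_const_sub_mul hgm hg a (c * t)) (hg.mono fun y hy ↦ ?_)
  simpa [mul_assoc] using h (t * g y) ⟨mul_nonneg ht hy.1, mul_le_of_le_one_right ht hy.2⟩

lemma tendsto_laplaceIntegral_one_slope :
    Tendsto (fun t ↦ (laplaceIntegral μ 1 g t - 1) / t) (𝓝[>] 0) (𝓝 (-∫ y, g y ∂μ)) := by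
  have hupper : Tendsto (fun t ↦ t - ∫ y, g y ∂μ) (𝓝[>] 0) (𝓝 (-∫ y, g y ∂μ)) := by
    simpa using (tendsto_nhdsWithin_of_tendsto_nhds (tendsto_id (x := 𝓝 (0 : ℝ)))).sub_const
      (∫ y, g y ∂μ)
  refine tendsto_of_tendsto_of_tendsto_of_le_of_le' tendsto_const_nhds hupper ?_ ?_
  · filter_upwards [self_mem_nhdsWithin] with t (ht : 0 < t)
    rw [le_div_iff₀ ht]
    linarith [one_sub_mul_integral_le_laplaceIntegral_one hgm hg ht.le]
  · filter_upwards [Ioc_mem_nhdsGT one_pos] with t ⟨ht, ht₁⟩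
    rw [div_le_iff₀ ht]
    have := laplaceIntegral_one_le (a := 1 + t ^ 2) (c := 1) hgm hg ht.le fun v hv ↦ by
      nlinarith [exp_neg_le_one_sub_add_sq hv.1 (hv.2.trans ht₁), hv.1, hv.2]
    nlinarith

end Probability

end LaplaceIntegral

lemma integral_Ioi_const_mul_eq_integral_comp_div (F : ℝ → ℝ) {b : ℝ} (hb : 0 < b) :
    ∫ t in Ioi 0, b * F t = ∫ s in Ioi 0, F (s / b) := by
  have h := integral_comp_mul_right_Ioi F 0 (inv_pos.2 hb)
  simp only [inv_inv, smul_eq_mul, ← div_eq_mul_inv, zero_div] at h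
  rw [integral_const_mul, h]

lemma tendsto_div_natCast_nhdsGT_zero {s : ℝ} (hs : 0 < s) :
    Tendsto (fun n : ℕ ↦ s / n) atTop (𝓝[>] 0) :=
  tendsto_nhdsWithin_iff.2 ⟨tendsto_const_div_atTop_nhds_zero_nat s,
    (eventually_gt_atTop 0).mono fun _ hn ↦ div_pos hs (Nat.cast_pos.2 hn)⟩

section Slope

variable {φ : ℝ → ℝ} {c : ℝ} (hφ : Tendsto (fun t ↦ (φ t - 1) / t) (𝓝[>] 0) (𝓝 c))
include hφ

lemma tendsto_nhdsGT_zero_one_of_tendsto_slope : Tendsto φ (𝓝[>] 0) (𝓝 1) := by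
  have h := (tendsto_nhdsWithin_of_tendsto_nhds (tendsto_id (x := 𝓝 (0 : ℝ)))).mul hφ
  rw [zero_mul] at h
  have h₁ := h.const_add 1
  rw [add_zero] at h₁
  refine h₁.congr' ?_
  filter_upwards [self_mem_nhdsWithin] with t (ht : 0 < t)
  simp only [id, mul_div_cancel₀ _ ht.ne', add_sub_cancel]

lemma tendsto_pow_sub_one_of_tendsto_slope {s : ℝ} (hs : 0 < s) :
    Tendsto (fun n : ℕ ↦ φ (s / n) ^ (n - 1)) atTop (𝓝 (exp (c * s))) := by
  have hu := tendsto_div_natCast_nhdsGT_zero hs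
  have h₁ := (tendsto_nhdsGT_zero_one_of_tendsto_slope hφ).comp hu
  have hpow : Tendsto (fun n : ℕ ↦ φ (s / n) ^ n) atTop (𝓝 (exp (c * s))) := by
    have := tendsto_one_add_pow_exp_of_tendsto (g := fun n : ℕ ↦ φ (s / n) - 1) (t := c * s) <|
      ((hφ.comp hu).mul_const s).congr' <| (eventually_gt_atTop 0).mono fun n hn ↦ by
        simp only [Function.comp_apply]
        field_simp
    simpa using this
  refine (hpow.div h₁ one_ne_zero).congr' ?_ |>.trans (by rw [div_one])
  filter_upwards [eventually_gt_atTop 0, h₁.eventually_ne one_ne_zero] with n hn hne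
  rw [Function.comp_apply] at hne
  rw [pow_sub₀ _ hne hn, pow_one, Pi.div_apply, Function.comp_apply, div_eq_mul_inv]

end Slope

theorem tendsto_integral_Ioi_natCast_mul_mul_pow {φ ψ : ℝ → ℝ} {B c k L : ℝ} (hc : 0 < c)
    (hk : 0 < k) (hψm : Measurable ψ) (hφm : Measurable φ) (hψB : ∀ t, 0 < t → |ψ t| ≤ B)
    (hψ : Tendsto ψ (𝓝[>] 0) (𝓝 L)) (hφ₀ : ∀ t, 0 < t → 0 ≤ φ t)
    (hφk : ∀ t, 0 < t → φ t ≤ (1 + k * t)⁻¹)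
    (hφ : Tendsto (fun t ↦ (φ t - 1) / t) (𝓝[>] 0) (𝓝 (-c))) :
    Tendsto (fun n : ℕ ↦ ∫ t in Ioi 0, n * (ψ t * φ t ^ (n - 1))) atTop (𝓝 (L / c)) := by
  have hlimit : ∫ s in Ioi 0, L * exp (-c * s) = L / c := by
    simp_rw [neg_mul, mul_comm c]
    rw [integral_const_mul, integral_Ioi_exp_neg_mul hc, div_eq_mul_inv]
  have hbound : ∀ n : ℕ, 3 ≤ n → ∀ s, 0 < s →
      ‖ψ (s / n) * φ (s / n) ^ (n - 1)‖ ≤ B * (1 + (k / 3 * s) ^ 2)⁻¹ := by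
    intro n hn s hs
    have hu : 0 < s / n := div_pos hs (by positivity)
    have hφu : φ (s / n) ^ (n - 1) ≤ (1 + (k / 3 * s) ^ 2)⁻¹ := by
      rw [show k / 3 * s = k * s / 3 by ring]
      exact pow_sub_one_le_inv_one_add_sq hn (by positivity) (hφ₀ _ hu)
        ((hφk _ hu).trans_eq (by rw [mul_div_assoc]))
    rw [norm_mul, norm_eq_abs, norm_of_nonneg (pow_nonneg (hφ₀ _ hu) _)]
    exact mul_le_mul (hψB _ hu) hφu (pow_nonneg (hφ₀ _ hu) _) ((abs_nonneg _).trans (hψB _ hu))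
  rw [← hlimit]
  refine (tendsto_integral_filter_of_dominated_convergence
    (F := fun (n : ℕ) s ↦ ψ (s / n) * φ (s / n) ^ (n - 1)) (fun s ↦ B * (1 + (k / 3 * s) ^ 2)⁻¹)
    (Eventually.of_forall fun n ↦ ?_) ?_ ?_ ?_).congr' ?_
  · exact ((hψm.comp (measurable_id.div_const _)).mul
      ((hφm.comp (measurable_id.div_const _)).pow_const _)).aestronglyMeasurable
  · filter_upwards [eventually_ge_atTop 3] with n hn
    filter_upwards [ae_restrict_mem measurableSet_Ioi] with s hs using hbound n hn s hs
  · exact ((integrable_inv_one_add_sq.comp_mul_left' (by positivity)).const_mul B).integrableOn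
  · filter_upwards [ae_restrict_mem measurableSet_Ioi] with s (hs : 0 < s)
    exact (hψ.comp (tendsto_div_natCast_nhdsGT_zero hs)).mul
      (tendsto_pow_sub_one_of_tendsto_slope hφ hs)
  · filter_upwards [eventually_gt_atTop 0] with n hn
    exact (integral_Ioi_const_mul_eq_integral_comp_div (fun t ↦ ψ t * φ t ^ (n - 1))
      (Nat.cast_pos.2 hn)).symm

instance : IsProbabilityMeasure (volume.restrict (Ioo (0 : ℝ) 1)) := ⟨by simp⟩

lemma sin_pi_mul_pos {x : ℝ} (hx : x ∈ Ioo (0 : ℝ) 1) : 0 < sin (π * x) :=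
  sin_pos_of_pos_of_lt_pi (mul_pos pi_pos hx.1) (by nlinarith [pi_pos, hx.2])

lemma two_mul_le_sin_pi_mul {x : ℝ} (h₀ : 0 ≤ x) (h₁ : x ≤ 1 / 2) : 2 * x ≤ sin (π * x) :=
  calc 2 * x = 2 / π * (π * x) := by field_simp
    _ ≤ sin (π * x) := mul_le_sin (by positivity) (by nlinarith [pi_pos])

lemma ae_sin_pi_mul_mem_Icc : ∀ᵐ x ∂volume.restrict (Ioo (0 : ℝ) 1), sin (π * x) ∈ Icc 0 1 :=
  (ae_restrict_mem measurableSet_Ioo).mono fun _ hx ↦ ⟨(sin_pi_mul_pos hx).le, sin_le_one _⟩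

lemma integral_Ioo_sin_pi_mul : ∫ x in Ioo (0 : ℝ) 1, sin (π * x) = 2 / π := by
  rw [← integral_Ioc_eq_integral_Ioo, ← intervalIntegral.integral_of_le zero_le_one,
    intervalIntegral.integral_comp_mul_left (fun x ↦ sin x) pi_ne_zero]
  simp only [mul_zero, mul_one, integral_sin, cos_zero, cos_pi, smul_eq_mul]
  ring

lemma integrableOn_Ioo_rpow {a : ℝ} (ha : -1 < a) : IntegrableOn (fun x : ℝ ↦ x ^ a) (Ioo 0 1) :=
  (intervalIntegrable_iff_integrableOn_Ioo_of_le zero_le_one).1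
    (intervalIntegral.intervalIntegrable_rpow' ha)

lemma integral_Ioo_rpow {a : ℝ} (ha : -1 < a) : ∫ x in Ioo (0 : ℝ) 1, x ^ a = 1 / (a + 1) := by
  rw [← integral_Ioc_eq_integral_Ioo, ← intervalIntegral.integral_of_le zero_le_one,
    integral_rpow (.inl ha), one_rpow, zero_rpow (by linarith), sub_zero]

lemma integral_Ioo_exp_neg_add_exp_neg_reflect {t : ℝ} (ht : 0 < t) :
    ∫ x in Ioo (0 : ℝ) 1, (exp (-(2 * t * x)) + exp (-(2 * t * (1 - x)))) =
      (1 - exp (-(2 * t))) / t := by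
  rw [← integral_Ioc_eq_integral_Ioo, ← intervalIntegral.integral_of_le zero_le_one,
    intervalIntegral.integral_eq_sub_of_hasDerivAt
      (f := fun x ↦ (exp (-(2 * t * (1 - x))) - exp (-(2 * t * x))) / (2 * t))
      (fun x _ ↦ ?_) (by apply Continuous.intervalIntegrable; fun_prop)]
  · field_simp
    simp only [sub_self, mul_zero, neg_zero, exp_zero, sub_zero, mul_one]
    ring
  · have h₁ : HasDerivAt (fun x ↦ -(2 * t * (1 - x))) (2 * t) x :=
      (((hasDerivAt_id x).const_sub 1).const_mul (2 * t)).neg.congr_deriv (by ring)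
    have h₂ : HasDerivAt (fun x ↦ -(2 * t * x)) (-(2 * t)) x :=
      ((hasDerivAt_id x).const_mul (2 * t)).neg.congr_deriv (by ring)
    exact ((h₁.exp.sub h₂.exp).div_const (2 * t)).congr_deriv (by field_simp; ring)

lemma laplaceIntegral_sin_le_inv {t : ℝ} (ht : 0 < t) :
    laplaceIntegral (volume.restrict (Ioo 0 1)) 1 (fun x ↦ sin (π * x)) t ≤ t⁻¹ := by
  have hpoint : ∀ x ∈ Ioo (0 : ℝ) 1,
      (1 : ℝ → ℝ) x * exp (-(t * sin (π * x))) ≤ exp (-(2 * t * x)) + exp (-(2 * t * (1 - x))) := by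
    intro x hx
    rw [Pi.one_apply, one_mul]
    rcases le_total x (1 / 2) with hx₂ | hx₂
    · have := two_mul_le_sin_pi_mul hx.1.le hx₂
      have : exp (-(t * sin (π * x))) ≤ exp (-(2 * t * x)) := exp_le_exp.2 (by nlinarith)
      linarith [exp_pos (-(2 * t * (1 - x)))]
    · have := two_mul_le_sin_pi_mul (x := 1 - x) (by linarith [hx.2]) (by linarith)
      rw [show π * (1 - x) = π - π * x by ring, sin_pi_sub] at this
      have : exp (-(t * sin (π * x))) ≤ exp (-(2 * t * (1 - x))) := exp_le_exp.2 (by nlinarith)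
      linarith [exp_pos (-(2 * t * x))]
  calc laplaceIntegral (volume.restrict (Ioo 0 1)) 1 (fun x ↦ sin (π * x)) t
      ≤ ∫ x in Ioo (0 : ℝ) 1, (exp (-(2 * t * x)) + exp (-(2 * t * (1 - x)))) :=
        setIntegral_mono_on (integrable_laplaceIntegral_one_integrand (by fun_prop)
          ae_sin_pi_mul_mem_Icc ht.le)
          ((Continuous.integrableOn_Icc (by fun_prop)).mono_set Ioo_subset_Icc_self)
          measurableSet_Ioo hpoint
    _ = (1 - exp (-(2 * t))) / t := integral_Ioo_exp_neg_add_exp_neg_reflect ht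
    _ ≤ t⁻¹ := by
      rw [div_eq_mul_inv]
      exact mul_le_of_le_one_left (inv_nonneg.2 ht.le) (by linarith [exp_pos (-(2 * t))])

lemma exists_laplaceIntegral_sin_le : ∃ k > 0, ∀ t > 0,
    laplaceIntegral (volume.restrict (Ioo 0 1)) 1 (fun x ↦ sin (π * x)) t ≤ (1 + k * t)⁻¹ := by
  -- The chord of `exp` over `[-2, 0]` handles `t ≤ 2`; the bound `t⁻¹` handles `t > 2`.
  have hk : 0 < (1 - exp (-2)) / π := div_pos (sub_pos.2 (exp_lt_one_iff.2 (by norm_num))) pi_pos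
  refine ⟨_, hk, fun t ht ↦ ?_⟩
  have hkt : 0 < 1 + (1 - exp (-2)) / π * t := add_pos one_pos (mul_pos hk ht)
  rcases le_or_gt t 2 with ht₂ | ht₂
  · have h := laplaceIntegral_one_le (by fun_prop) ae_sin_pi_mul_mem_Icc ht.le
      fun v hv ↦ exp_neg_le_chord two_pos hv.1 (hv.2.trans ht₂)
    rw [integral_Ioo_sin_pi_mul] at h
    refine h.trans ?_
    rw [← one_div, le_div_iff₀ hkt]
    field_simp
    nlinarith [sq_nonneg ((1 - exp (-2)) * t)]
  · refine (laplaceIntegral_sin_le_inv ht).trans (inv_anti₀ hkt ?_)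
    have : (1 - exp (-2)) / π ≤ 1 / 2 := by
      rw [div_le_iff₀ pi_pos]
      linarith [exp_pos (-2), two_le_pi]
    nlinarith

lemma integral_cube_eq_integral_Ioi_laplaceIntegral {a : ℝ} (ha : -1 < a) (n : ℕ) :
    ∫ x : Fin n → ℝ in univ.pi (fun _ ↦ Ioo 0 1), (∑ i, x i ^ a) / ∑ i, sin (π * x i) =
      ∫ t in Ioi 0,
        n * (laplaceIntegral (volume.restrict (Ioo 0 1)) (· ^ a) (fun x ↦ sin (π * x)) t *
          laplaceIntegral (volume.restrict (Ioo 0 1)) 1 (fun x ↦ sin (π * x)) t ^ (n - 1)) := by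
  rw [volume_pi, Measure.restrict_pi_pi]
  exact integral_pi_sum_div_sum n (integrableOn_Ioo_rpow ha) (by fun_prop)
    ((ae_restrict_mem measurableSet_Ioo).mono fun x hx ↦ rpow_nonneg hx.1.le a) (by fun_prop)
    ((ae_restrict_mem measurableSet_Ioo).mono fun x hx ↦ sin_pi_mul_pos hx)

/-- For a real `a ≥ 0`, the integrals
`I_n(a) = ∫_{(0,1)^n} (∑ xᵢ^a)/(∑ sin(π xᵢ)) dx` converge to `π/(2(a+1))` as `n → ∞`. -/
theorem tendsto_integral_powerSum_sin_ratio (a : ℝ) (ha : 0 ≤ a) :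
    Tendsto
      (fun n : ℕ =>
        ∫ x : Fin n → ℝ in Set.univ.pi (fun _ => Set.Ioo (0:ℝ) 1),
          (∑ i, x i ^ a) / (∑ i, Real.sin (Real.pi * x i)))
      atTop (nhds (Real.pi / (2 * (a + 1)))) := by
  have ha' : -1 < a := by linarith
  have hrpow : Integrable (fun x : ℝ ↦ x ^ a) (volume.restrict (Ioo 0 1)) :=
    integrableOn_Ioo_rpow ha'
  have hsin₀ : 0 ≤ᵐ[volume.restrict (Ioo 0 1)] fun x ↦ sin (π * x) :=
    ae_sin_pi_mul_mem_Icc.mono fun _ hx ↦ hx.1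
  have hψ := tendsto_laplaceIntegral_nhdsGT_zero hrpow (by fun_prop) hsin₀
  have hφ := tendsto_laplaceIntegral_one_slope (by fun_prop) ae_sin_pi_mul_mem_Icc
  rw [integral_Ioo_rpow ha'] at hψ
  rw [integral_Ioo_sin_pi_mul] at hφ
  obtain ⟨k, hk, hφk⟩ := exists_laplaceIntegral_sin_le
  rw [show π / (2 * (a + 1)) = 1 / (a + 1) / (2 / π) by field_simp]
  refine .congr (fun n ↦ (integral_cube_eq_integral_Ioi_laplaceIntegral ha' n).symm) ?_
  exact tendsto_integral_Ioi_natCast_mul_mul_pow (by positivity) hk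
    (measurable_laplaceIntegral (by fun_prop) (by fun_prop))
    (measurable_laplaceIntegral measurable_const (by fun_prop))
    (fun t ht ↦ abs_laplaceIntegral_le hrpow hsin₀ ht.le) hψ
    (fun t _ ↦ laplaceIntegral_nonneg (ae_of_all _ fun _ ↦ zero_le_one)) hφk hφ
end

section
/- Let μ be a probability measure on a measurable space Ω, and let f, g : Ω → ℝ be measurable functions with f, g integrable with respect to μ, g > 0 μ-almost everywhere, ∫ g dμ ≠ 0, and the ratio f/g bounded on Ω (i.e. there is C with |f(x)| ≤ C·g(x) for all x). Let (X_i)_{i≥1} be an i.i.d. sequence of Ω-valued random variables with common law μ, and define L_n = E[(Σ_{i=1}^n f(X_i))/(Σ_{i=1}^n g(X_i))]. Then lim_{n→∞} L_n = (∫ f dμ)/(∫ g dμ). -/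
/-!
By the strong law of large numbers, almost surely `(∑ᵢ<ₙ f(Xᵢ))/n → ∫ f dμ` and
`(∑ᵢ<ₙ g(Xᵢ))/n → ∫ g dμ ≠ 0`, so the ratio of the two sums converges almost surely to
`(∫ f dμ)/(∫ g dμ)`. Since `|f| ≤ C g` and `g > 0` almost everywhere, the ratio is bounded by `C`,
and dominated convergence turns the almost sure convergence into convergence of expectations.
-/

open MeasureTheory Filter ProbabilityTheory

theorem abs_sum_div_sum_le {ι K : Type*} [Field K] [LinearOrder K] [IsStrictOrderedRing K]
    {s : Finset ι} (hs : s.Nonempty) {a b : ι → K} {C : K}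
    (hb : ∀ i ∈ s, 0 < b i) (hab : ∀ i ∈ s, |a i| ≤ C * b i) :
    |(∑ i ∈ s, a i) / ∑ i ∈ s, b i| ≤ C := by
  have hsum : 0 < ∑ i ∈ s, b i := Finset.sum_pos hb hs
  rw [abs_div, abs_of_pos hsum, div_le_iff₀ hsum, Finset.mul_sum]
  exact (Finset.abs_sum_le_sum_abs a s).trans (Finset.sum_le_sum hab)

theorem tendsto_div_of_tendsto_div_natCast {u v : ℕ → ℝ} {a b : ℝ}
    (hu : Tendsto (fun n ↦ u n / n) atTop (nhds a))
    (hv : Tendsto (fun n ↦ v n / n) atTop (nhds b)) (hb : b ≠ 0) :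
    Tendsto (fun n ↦ u n / v n) atTop (nhds (a / b)) := by
  refine (hu.div hv hb).congr' ?_
  filter_upwards [eventually_ge_atTop 1] with n hn
  exact div_div_div_cancel_right₀ (by positivity) _ _

section IdenticallyDistributed

variable {Ω Ω' : Type*} [MeasurableSpace Ω] [MeasurableSpace Ω'] {μ : Measure Ω}
  {P : Measure Ω'}

theorem ae_forall_comp_of_map_eq {ι : Type*} [Countable ι] {X : ι → Ω' → Ω}
    (hX : ∀ i, AEMeasurable (X i) P)
    (hlaw : ∀ i, P.map (X i) = μ) {p : Ω → Prop} (hp : ∀ᵐ x ∂μ, p x) :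
    ∀ᵐ ω ∂P, ∀ i, p (X i ω) :=
  ae_all_iff.2 fun i ↦ ae_of_ae_map (hX i) (by rwa [hlaw i])

theorem aemeasurable_comp_of_map_eq {β : Type*} [MeasurableSpace β] {Y : Ω' → Ω}
    (hY : AEMeasurable Y P) (hlaw : P.map Y = μ) {h : Ω → β} (hh : AEMeasurable h μ) :
    AEMeasurable (fun ω ↦ h (Y ω)) P :=
  (hlaw ▸ hh).comp_aemeasurable hY

theorem ae_tendsto_average_comp {X : ℕ → Ω' → Ω} (hX : ∀ i, AEMeasurable (X i) P)
    (hindep : iIndepFun X P) (hlaw : ∀ i, P.map (X i) = μ) {h : Ω → ℝ} (hh : Integrable h μ) :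
    ∀ᵐ ω ∂P, Tendsto (fun n : ℕ ↦ (∑ i ∈ Finset.range n, h (X i ω)) / n) atTop
      (nhds (∫ x, h x ∂μ)) := by
  have hh_map : ∀ i, AEMeasurable h (P.map (X i)) := fun i ↦ hlaw i ▸ hh.aemeasurable
  have hint : Integrable (h ∘ X 0) P := (hlaw 0 ▸ hh).comp_aemeasurable (hX 0)
  have hmean : ∫ ω, h (X 0 ω) ∂P = ∫ x, h x ∂μ := by
    rw [← integral_map (hX 0) (hlaw 0 ▸ hh.aestronglyMeasurable), hlaw 0]
  have hslln := strong_law_ae_real (fun i ↦ h ∘ X i) hint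
    (fun i j hij ↦ (hindep.indepFun hij).comp₀ (hX i) (hX j) (hh_map i) (hh_map j))
    (fun i ↦ IdentDistrib.comp_of_aemeasurable ⟨hX i, hX 0, (hlaw i).trans (hlaw 0).symm⟩
      (hh_map i))
  simpa only [Function.comp_apply, hmean] using hslln

end IdenticallyDistributed

theorem tendsto_expectation_ratio_general
    {Ω : Type*} [MeasurableSpace Ω] (μ : Measure Ω)
    (f g : Ω → ℝ) (hf : Integrable f μ) (hg : Integrable g μ)
    (hgpos : ∀ᵐ x ∂μ, 0 < g x) (hgint : ∫ x, g x ∂μ ≠ 0)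
    (C : ℝ) (hbound : ∀ x, |f x| ≤ C * g x)
    {Ω' : Type*} [MeasurableSpace Ω'] (P : Measure Ω') [IsProbabilityMeasure P]
    (X : ℕ → Ω' → Ω) (hmeas : ∀ i, Measurable (X i))
    (hindep : iIndepFun X P)
    (hlaw : ∀ i, Measure.map (X i) P = μ) :
    Tendsto
      (fun n : ℕ =>
        ∫ ω, (∑ i ∈ Finset.range n, f (X i ω)) / (∑ i ∈ Finset.range n, g (X i ω)) ∂P)
      atTop (nhds ((∫ x, f x ∂μ) / (∫ x, g x ∂μ))) := by
  have hX (i : ℕ) : AEMeasurable (X i) P := (hmeas i).aemeasurable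
  have hratio_meas (n : ℕ) : AEStronglyMeasurable
      (fun ω ↦ (∑ i ∈ Finset.range n, f (X i ω)) / ∑ i ∈ Finset.range n, g (X i ω)) P :=
    ((Finset.aemeasurable_fun_sum _ fun i _ ↦
        aemeasurable_comp_of_map_eq (hX i) (hlaw i) hf.aemeasurable).div
      (Finset.aemeasurable_fun_sum _ fun i _ ↦
        aemeasurable_comp_of_map_eq (hX i) (hlaw i) hg.aemeasurable)).aestronglyMeasurable
  have hratio_le : ∀ᶠ n in atTop, ∀ᵐ ω ∂P,
      ‖(∑ i ∈ Finset.range n, f (X i ω)) / ∑ i ∈ Finset.range n, g (X i ω)‖ ≤ C := by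
    filter_upwards [eventually_ge_atTop 1] with n hn
    filter_upwards [ae_forall_comp_of_map_eq hX hlaw hgpos] with ω hpos
    exact abs_sum_div_sum_le (Finset.nonempty_range_iff.2 (by omega))
      (fun i _ ↦ hpos i) (fun i _ ↦ hbound _)
  have hratio_lim : ∀ᵐ ω ∂P, Tendsto
      (fun n : ℕ ↦ (∑ i ∈ Finset.range n, f (X i ω)) / ∑ i ∈ Finset.range n, g (X i ω))
      atTop (nhds ((∫ x, f x ∂μ) / ∫ x, g x ∂μ)) := by
    filter_upwards [ae_tendsto_average_comp hX hindep hlaw hf,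
      ae_tendsto_average_comp hX hindep hlaw hg] with ω hF hG
    exact tendsto_div_of_tendsto_div_natCast hF hG hgint
  simpa using tendsto_integral_filter_of_dominated_convergence (fun _ ↦ C)
    (Eventually.of_forall hratio_meas) hratio_le (integrable_const C) hratio_lim

/-- Let `μ` be a probability measure on `Ω`, `f g : Ω → ℝ` integrable with `g > 0`
`μ`-a.e., `∫ g dμ ≠ 0`, and `|f| ≤ C·g` pointwise. If `(X i)` is an i.i.d. sequence
of `Ω`-valued random variables with common law `μ`, then
`E[(∑ f(Xᵢ))/(∑ g(Xᵢ))] → (∫ f dμ)/(∫ g dμ)` as `n → ∞`. -/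
theorem tendsto_expectation_ratio
    {Ω : Type*} [MeasurableSpace Ω] (μ : Measure Ω) [IsProbabilityMeasure μ]
    (f g : Ω → ℝ) (hf : Integrable f μ) (hg : Integrable g μ)
    (hgpos : ∀ᵐ x ∂μ, 0 < g x) (hgint : ∫ x, g x ∂μ ≠ 0)
    (C : ℝ) (hbound : ∀ x, |f x| ≤ C * g x)
    {Ω' : Type*} [MeasurableSpace Ω'] (P : Measure Ω') [IsProbabilityMeasure P]
    (X : ℕ → Ω' → Ω) (hmeas : ∀ i, Measurable (X i))
    (hindep : iIndepFun X P)
    (hlaw : ∀ i, Measure.map (X i) P = μ) :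
    Tendsto
      (fun n : ℕ =>
        ∫ ω, (∑ i ∈ Finset.range n, f (X i ω)) / (∑ i ∈ Finset.range n, g (X i ω)) ∂P)
      atTop (nhds ((∫ x, f x ∂μ) / (∫ x, g x ∂μ))) :=
  tendsto_expectation_ratio_general μ f g hf hg hgpos hgint C hbound P X hmeas hindep hlaw
end

section
/- Let A ∈ M_n(ℂ) and define the matrix sequence A_0 = A and, for all k ≥ 0, A_{k+1} = A·(A_k - (Tr(A_k)/(k+1))·I_n). Then the characteristic polynomial of A satisfies det(X·I - A) = X^n - Σ_{k=1}^{n} (Tr(A_{k-1})/k) · X^{n-k}; equivalently, det(A - X·I) = (-1)^n (X^n - Σ_{k=1}^{n} (Tr(A_{k-1})/k) X^{n-k}). -/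
open Matrix Polynomial

/-- The Le Verrier–Souriau–Faddeev matrix sequence: `A₀ = A` and
`A_{k+1} = A·(A_k - (Tr(A_k)/(k+1))·I)`. -/
noncomputable def lvsfSeq {n : ℕ} (A : Matrix (Fin n) (Fin n) ℂ) :
    ℕ → Matrix (Fin n) (Fin n) ℂ
  | 0 => A
  | k + 1 => A * (lvsfSeq A k - (((lvsfSeq A k).trace / (k + 1)) • (1 : Matrix (Fin n) (Fin n) ℂ)))

/-!
Write `adj(X·I - A) = ∑ₖ Bₖ Xᵏ` and `χ_A = ∑ₖ cₖ Xᵏ`. Comparing coefficients in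
`(X·I - A) · adj(X·I - A) = χ_A · I` gives `A Bₖ₊₁ = Bₖ - cₖ₊₁ I`, and Jacobi's formula
`χ_A' = Tr adj(X·I - A)` gives `Tr Bₖ = (k + 1) cₖ₊₁`; together, `Tr (A Bₖ) = (k - n) cₖ`.
Hence by induction `A_j = A B_{n-1-j}`, so that `Tr(A_j) / (j + 1) = -c_{n-1-j}`.
-/

namespace Matrix
variable {R : Type*} [CommRing R] {m : Type*} [Fintype m] [DecidableEq m]

theorem derivative_det (M : Matrix m m R[X]) :
    derivative M.det = ∑ j, (M.updateCol j fun i => derivative (M i j)).det := by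
  simp only [det_apply, map_sum, Units.smul_def, map_zsmul, derivative_prod_finset,
    Finset.smul_sum]
  rw [Finset.sum_comm]
  refine Finset.sum_congr rfl fun j _ => Finset.sum_congr rfl fun σ _ => ?_
  rw [← Finset.mul_prod_erase _ _ (Finset.mem_univ j), mul_comm, updateCol_self]
  congr 2
  refine Finset.prod_congr rfl fun i hi => ?_
  rw [updateCol_ne (Finset.ne_of_mem_erase hi)]

theorem derivative_charpoly (A : Matrix m m R) :
    derivative A.charpoly = (adjugate (charmatrix A)).trace := by
  rw [← charpoly_transpose, charpoly, derivative_det]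
  refine Finset.sum_congr rfl fun j _ => ?_
  -- the derivative of column `j` of `X·I - Aᵀ` is the `j`-th basis vector: a diagonal cofactor
  have : (fun i => derivative (charmatrix Aᵀ i j)) = Pi.single j 1 := by
    ext i : 1
    simp [charmatrix_apply, diagonal_apply, Pi.single_apply, apply_ite derivative]
  rw [this, diag_apply, adjugate_apply, charmatrix_transpose, updateCol_transpose, det_transpose]

theorem trace_coeff_matPolyEquiv (M : Matrix m m R[X]) (k : ℕ) :
    ((matPolyEquiv M).coeff k).trace = M.trace.coeff k := by
  simp only [trace, diag_apply, finsetSum_coeff, matPolyEquiv_coeff_apply]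

noncomputable def adjCharmatrixCoeff (A : Matrix m m R) (k : ℕ) : Matrix m m R :=
  (matPolyEquiv (adjugate (charmatrix A))).coeff k

section

variable (A : Matrix m m R)

theorem X_sub_C_mul_matPolyEquiv_adjugate_charmatrix :
    (X - C A) * matPolyEquiv (adjugate (charmatrix A)) =
      A.charpoly.map (algebraMap R (Matrix m m R)) := by
  rw [← matPolyEquiv_charmatrix, ← map_mul, mul_adjugate, matPolyEquiv_smul_one, charpoly]

theorem mul_adjCharmatrixCoeff_succ (k : ℕ) :
    A * adjCharmatrixCoeff A (k + 1) = adjCharmatrixCoeff A k - A.charpoly.coeff (k + 1) • 1 := by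
  have := congr_arg (coeff · (k + 1)) (X_sub_C_mul_matPolyEquiv_adjugate_charmatrix A)
  simp only [sub_mul, coeff_sub, coeff_X_mul, coeff_C_mul, coeff_map,
    Algebra.algebraMap_eq_smul_one] at this
  rw [adjCharmatrixCoeff, adjCharmatrixCoeff, ← this, sub_sub_cancel]

theorem mul_adjCharmatrixCoeff_zero :
    A * adjCharmatrixCoeff A 0 = -(A.charpoly.coeff 0 • 1) := by
  have := congr_arg (coeff · 0) (X_sub_C_mul_matPolyEquiv_adjugate_charmatrix A)
  simp only [sub_mul, coeff_sub, mul_coeff_zero, coeff_X_zero, zero_mul, zero_sub, coeff_C_zero,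
    coeff_map, Algebra.algebraMap_eq_smul_one] at this
  rw [adjCharmatrixCoeff, ← this, neg_neg]

theorem adjCharmatrixCoeff_eq_zero_of_card_le {k : ℕ} (hk : Fintype.card m ≤ k) :
    adjCharmatrixCoeff A k = 0 := by
  nontriviality R
  -- beyond the degree of `χ_A` the recurrence reads `Bᵢ = A Bᵢ₊₁`, so `Bₖ = Aʲ Bₖ₊ⱼ` for all `j`
  have hstep (i : ℕ) (hi : Fintype.card m ≤ i) :
      adjCharmatrixCoeff A i = A * adjCharmatrixCoeff A (i + 1) := by
    rw [mul_adjCharmatrixCoeff_succ, coeff_eq_zero_of_natDegree_lt (by simp; omega), zero_smul,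
      sub_zero]
  have hpow (j : ℕ) : adjCharmatrixCoeff A k = A ^ j * adjCharmatrixCoeff A (k + j) := by
    induction j with
    | zero => simp
    | succ j ih => rw [ih, hstep _ (by omega), pow_succ, mul_assoc, add_assoc]
  rw [hpow ((matPolyEquiv (adjugate (charmatrix A))).natDegree + 1), adjCharmatrixCoeff,
    coeff_eq_zero_of_natDegree_lt (by omega), mul_zero]

theorem adjCharmatrixCoeff_eq_one_of_add_one_eq_card {k : ℕ} (hk : k + 1 = Fintype.card m) :
    adjCharmatrixCoeff A k = 1 := by
  nontriviality R
  have := mul_adjCharmatrixCoeff_succ A k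
  rwa [adjCharmatrixCoeff_eq_zero_of_card_le A hk.ge, mul_zero, eq_comm, sub_eq_zero, hk,
    ← A.charpoly_natDegree_eq_dim, A.charpoly_monic.coeff_natDegree, one_smul] at this

theorem trace_adjCharmatrixCoeff (k : ℕ) :
    (adjCharmatrixCoeff A k).trace = (k + 1) * A.charpoly.coeff (k + 1) := by
  rw [adjCharmatrixCoeff, trace_coeff_matPolyEquiv, ← derivative_charpoly, coeff_derivative,
    mul_comm]

theorem trace_mul_adjCharmatrixCoeff (k : ℕ) :
    (A * adjCharmatrixCoeff A k).trace = (k - Fintype.card m) * A.charpoly.coeff k := by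
  cases k with
  | zero => simp [mul_adjCharmatrixCoeff_zero, mul_comm]
  | succ k =>
    rw [mul_adjCharmatrixCoeff_succ, trace_sub, trace_adjCharmatrixCoeff, trace_smul, trace_one,
      smul_eq_mul]
    push_cast
    ring

end

theorem trace_mul_adjCharmatrixCoeff_div {K : Type*} [Field K] [CharZero K] (A : Matrix m m K)
    {i j : ℕ} (h : i + j + 1 = Fintype.card m) :
    (A * adjCharmatrixCoeff A i).trace / (j + 1) = -A.charpoly.coeff i := by
  rw [trace_mul_adjCharmatrixCoeff, ← h, div_eq_iff (Nat.cast_add_one_ne_zero j)]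
  push_cast
  ring

end Matrix

theorem lvsfSeq_eq_mul_adjCharmatrixCoeff {n : ℕ} (A : Matrix (Fin n) (Fin n) ℂ) {i j : ℕ}
    (h : i + j + 1 = n) : lvsfSeq A j = A * A.adjCharmatrixCoeff i := by
  induction j generalizing i with
  | zero =>
    rw [lvsfSeq, adjCharmatrixCoeff_eq_one_of_add_one_eq_card A (by simpa using h), mul_one]
  | succ j ih =>
    have hprev := ih (i := i + 1) (by omega)
    rw [lvsfSeq, hprev, trace_mul_adjCharmatrixCoeff_div A (j := j) (by simp; omega),
      neg_smul, sub_neg_eq_add, eq_sub_iff_add_eq.mp (mul_adjCharmatrixCoeff_succ A i)]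

/-- Le Verrier–Souriau–Faddeev algorithm: the characteristic polynomial of `A ∈ Mₙ(ℂ)`
is `det(X·I - A) = X^n - ∑_{k=1}^n (Tr(A_{k-1})/k) X^{n-k}`, where `(A_k)` is the
sequence `A₀ = A`, `A_{k+1} = A·(A_k - (Tr(A_k)/(k+1))·I)`. -/
theorem charpoly_eq_lvsf
    {n : ℕ} (A : Matrix (Fin n) (Fin n) ℂ) :
    A.charpoly =
      X ^ n - ∑ k ∈ Finset.Icc 1 n, C ((lvsfSeq A (k - 1)).trace / k) * X ^ (n - k) := by
  have hsum : ∑ k ∈ Finset.Icc 1 n, C ((lvsfSeq A (k - 1)).trace / k) * X ^ (n - k) =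
      -∑ i ∈ Finset.range n, C (A.charpoly.coeff i) * X ^ i := by
    rw [← Finset.sum_neg_distrib]
    refine Finset.sum_nbij' (n - ·) (n - ·) (by simp; omega) (by simp; omega) (by simp; omega)
      (by simp; omega) fun k hk => ?_
    obtain ⟨hk1, hkn⟩ := Finset.mem_Icc.mp hk
    have hij : n - k + (k - 1) + 1 = n := by omega
    rw [lvsfSeq_eq_mul_adjCharmatrixCoeff A hij, ← neg_mul, ← map_neg,
      ← trace_mul_adjCharmatrixCoeff_div A (by simpa using hij)]
    push_cast [hk1]
    ring_nf
  rw [hsum, sub_neg_eq_add]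
  simpa using A.charpoly_monic.as_sum
end
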